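/- In the stick percolation model, suppose the stick length distribution μ has a Cauchy-type tail: for some c > 0, x · R(x) → c as x → ∞, where R(x) = μ((x,∞)). If λ > 1/c, then the system percolates with probability 1, i.e. P(E) = 1. -/

import Mathlib

open MeasureTheory ProbabilityTheory

/-- The stick percolation model: i.i.d. exponential(lam) spacings `X i` between the
seeds, i.i.d. stick lengths `S i` with law `μ`, the two families being mutually
independent. -/
structure StickModel {Ω : Type} [MeasurableSpace Ω] (P : Measure Ω)
    (lam : ℝ) (μ : Measure ℝ) where
  X : ℕ → Ω → ℝ
  S : ℕ → Ω → ℝ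
  measX : ∀ i, Measurable (X i)
  measS : ∀ i, Measurable (S i)
  distX : ∀ i, P.map (X i) = expMeasure lam
  distS : ∀ i, P.map (S i) = μ
  indep : iIndepFun (Sum.elim X S) P

/-- The `n`-th seed `x_n = X_0 + ⋯ + X_n`. -/
noncomputable def StickModel.seed {Ω : Type} [MeasurableSpace Ω] {P : Measure Ω}
    {lam : ℝ} {μ : Measure ℝ} (M : StickModel P lam μ) (n : ℕ) (ω : Ω) : ℝ :=
  ∑ i ∈ Finset.range (n + 1), M.X i ω

/-- The percolation event: the union of the sticks `[x_n, x_n + S_n]` contains a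
half-line `[a, ∞)`. -/
def StickModel.Percolates {Ω : Type} [MeasurableSpace Ω] {P : Measure Ω}
    {lam : ℝ} {μ : Measure ℝ} (M : StickModel P lam μ) (ω : Ω) : Prop :=
  ∃ a : ℝ, Set.Ici a ⊆ ⋃ n : ℕ, Set.Icc (M.seed n ω) (M.seed n ω + M.S n ω)

/-!
Fix `b` with `1 / λ < b < c` and `cs > 1` with `cs * b < c`. The tail hypothesis gives
`P(S < b k) ≤ 1 - cs / k ≤ (k / (k + 1)) ^ cs` for `k ≥ k₀`, so products of these probabilities
over `k ∈ (l, n]` telescope to at most `(max (l + 1) k₀ / (n + 1)) ^ cs`.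

Percolation fails only if, for infinitely many `n`, the seed `x_{n+1}` lies beyond every earlier
stick (`StickModel.gap n`). Let `m` be the first index with `x_{n+1} - x_m ≥ b (n + 1 - m)`. Then
the `n + 1 - m` spacings after `x_m` are long, which by a Chernoff bound has probability at most
`r ^ (n + 1 - m)` with `r = λ b e^{1 - λ b} < 1`, and each stick `i < m` is shorter than
`b (n + 1 - i)`, an event independent of the spacings and bounded by the product above. Summing
over `m` gives `P(gap n) = O(n ^ (-cs))`, which is summable, so Borel–Cantelli and `x_n → ∞`
conclude.
-/

open Set Filter Real
open scoped Finset

lemma measurable_gammaPDF (a r : ℝ) : Measurable (gammaPDF a r) :=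
  (measurable_gammaPDFReal a r).ennreal_ofReal

lemma toReal_gammaPDF_one_mul_exp {r : ℝ} (hr : 0 ≤ r) (t : ℝ) :
    (fun x => (gammaPDF 1 r x).toReal * rexp (t * x))
      = (Ici 0).indicator (fun x => r * rexp ((t - r) * x)) := by
  ext x
  by_cases hx : 0 ≤ x
  · rw [indicator_of_mem (mem_Ici.2 hx), gammaPDF_of_nonneg hx,
      ENNReal.toReal_ofReal (by positivity)]
    simp only [rpow_one, Gamma_one, div_one, sub_self, rpow_zero, mul_one, mul_assoc,
      ← Real.exp_add]
    ring_nf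
  · rw [indicator_of_notMem (by simpa using hx), gammaPDF_of_neg (not_le.1 hx)]
    simp

lemma ae_nonneg_expMeasure (r : ℝ) : ∀ᵐ x ∂expMeasure r, 0 ≤ x := by
  rw [ae_iff]
  simp only [not_le]
  change expMeasure r (Iio 0) = 0
  rw [expMeasure, gammaMeasure, withDensity_apply _ measurableSet_Iio]
  exact lintegral_gammaPDF_of_nonpos le_rfl

lemma integrable_exp_mul_expMeasure {r t : ℝ} (hr : 0 ≤ r) (ht : t < r) :
    Integrable (fun x => rexp (t * x)) (expMeasure r) := by
  rw [expMeasure, gammaMeasure, integrable_withDensity_iff (measurable_gammaPDF 1 r)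
    (ae_of_all _ fun _ => ENNReal.ofReal_lt_top)]
  simp_rw [mul_comm (rexp _)]
  rw [toReal_gammaPDF_one_mul_exp hr, integrable_indicator_iff measurableSet_Ici,
    integrableOn_Ici_iff_integrableOn_Ioi]
  exact (integrableOn_exp_mul_Ioi (by linarith) 0).const_mul r

lemma integral_exp_mul_expMeasure {r t : ℝ} (hr : 0 ≤ r) (ht : t < r) :
    ∫ x, rexp (t * x) ∂expMeasure r = r / (r - t) := by
  rw [expMeasure, gammaMeasure, integral_withDensity_eq_integral_toReal_smul
    (measurable_gammaPDF 1 r) (ae_of_all _ fun _ => ENNReal.ofReal_lt_top)]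
  simp only [smul_eq_mul]
  rw [toReal_gammaPDF_one_mul_exp hr, integral_indicator measurableSet_Ici,
    integral_Ici_eq_integral_Ioi, integral_const_mul, integral_exp_mul_Ioi (by linarith),
    mul_zero, Real.exp_zero, ← neg_div_neg_eq, neg_neg, neg_sub, mul_one_div]

lemma mul_exp_one_sub_lt_one {x : ℝ} (hx : x ≠ 1) : x * rexp (1 - x) < 1 := by
  have h := add_one_lt_exp (sub_ne_zero.2 hx)
  calc x * rexp (1 - x) = x / rexp (x - 1) := by rw [div_eq_mul_inv, ← exp_neg, neg_sub]
    _ < 1 := (div_lt_one (exp_pos _)).2 (by linarith)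

lemma ae_eventually_notMem_of_summable {α : Type*} [MeasurableSpace α] {μ : Measure α}
    [IsFiniteMeasure μ] {s : ℕ → Set α} {f : ℕ → ℝ} (hf : Summable f)
    (hs : ∀ n, μ.real (s n) ≤ f n) : ∀ᵐ x ∂μ, ∀ᶠ n in atTop, x ∉ s n := by
  refine ae_eventually_notMem (ne_top_of_le_ne_top (ENNReal.ofReal_ne_top (r := ∑' n, f n)) ?_)
  rw [ENNReal.ofReal_tsum_of_nonneg (fun n => measureReal_nonneg.trans (hs n)) hf]
  refine ENNReal.tsum_le_tsum fun n => ?_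
  rw [← ofReal_measureReal]
  exact ENNReal.ofReal_le_ofReal (hs n)

lemma prod_range_le_div_of_le_div {f ψ : ℕ → ℝ} {m : ℕ} (hf : ∀ i < m, 0 ≤ f i)
    (hψ : ∀ i, 0 < ψ i) (h : ∀ i < m, f i ≤ ψ (i + 1) / ψ i) :
    ∏ i ∈ Finset.range m, f i ≤ ψ m / ψ 0 := by
  induction m with
  | zero => simp [(hψ 0).ne']
  | succ m ih =>
    rw [Finset.prod_range_succ]
    calc (∏ i ∈ Finset.range m, f i) * f m
        ≤ ψ m / ψ 0 * (ψ (m + 1) / ψ m) :=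
          mul_le_mul (ih (fun i hi => hf i (by omega)) fun i hi => h i (by omega))
            (h m (by omega)) (hf m (by omega)) (div_nonneg (hψ m).le (hψ 0).le)
      _ = ψ (m + 1) / ψ 0 := by field_simp [(hψ m).ne']

lemma measureReal_Iio_le_rpow_of_lt {μ : Measure ℝ} [IsProbabilityMeasure μ] {u k cs : ℝ}
    (hk : 0 < k) (hcs : 1 ≤ cs) (h : cs / k < μ.real (Ioi u)) :
    μ.real (Iio u) ≤ (k / (k + 1)) ^ cs := by
  have hIic : μ.real (Iic u) = 1 - μ.real (Ioi u) := by
    rw [← compl_Ioi, probReal_compl_eq_one_sub measurableSet_Ioi]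
  have hk' : cs / (k + 1) ≤ cs / k := div_le_div_of_nonneg_left (by linarith) hk (by linarith)
  have hbern := one_add_mul_self_le_rpow_one_add (s := -(1 / (k + 1)))
    (by rw [neg_le_neg_iff]; exact (div_le_one (by linarith)).2 (by linarith)) hcs
  calc μ.real (Iio u) ≤ μ.real (Iic u) := measureReal_mono Iio_subset_Iic_self
    _ ≤ 1 + cs * -(1 / (k + 1)) := by rw [mul_neg, mul_one_div]; linarith
    _ ≤ (1 + -(1 / (k + 1))) ^ cs := hbern
    _ = (k / (k + 1)) ^ cs := by congr 1; field_simp; ring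

lemma exists_measureReal_Iio_le_max_rpow_div {μ : Measure ℝ} [IsProbabilityMeasure μ]
    {c b cs : ℝ} (htail : Tendsto (fun x : ℝ => x * (μ (Ioi x)).toReal) atTop (nhds c))
    (hb : 0 < b) (hcs : 1 ≤ cs) (hcsb : cs * b < c) :
    ∃ k0 : ℕ, 1 ≤ k0 ∧ ∀ k : ℕ, μ.real (Iio (b * k))
      ≤ ((max k k0 : ℕ) : ℝ) ^ cs / ((max (k + 1) k0 : ℕ) : ℝ) ^ cs := by
  have hev : ∀ᶠ k : ℕ in atTop, cs * b < b * k * (μ (Ioi (b * k))).toReal :=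
    (htail.comp (tendsto_natCast_atTop_atTop.const_mul_atTop hb)).eventually
      (eventually_gt_nhds hcsb)
  obtain ⟨k0, hk0⟩ := eventually_atTop.1 (hev.and (eventually_ge_atTop 1))
  refine ⟨k0, (hk0 k0 le_rfl).2, fun k => ?_⟩
  rcases lt_or_ge k k0 with hk | hk
  · rw [max_eq_right hk.le, max_eq_right hk,
      div_self (rpow_pos_of_pos (Nat.cast_pos.2 (by omega)) _).ne']
    exact measureReal_le_one (μ := μ)
  · obtain ⟨hR, hk1⟩ := hk0 k hk
    rw [max_eq_left hk, max_eq_left (by omega)]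
    push_cast
    rw [← div_rpow (by positivity) (by positivity)]
    refine measureReal_Iio_le_rpow_of_lt (μ := μ) (by positivity) hcs ?_
    rw [div_lt_iff₀ (by positivity), measureReal_def, mul_comm]
    exact lt_of_mul_lt_mul_left (by linarith) hb.le

lemma summable_pow_mul_max_rpow {r : ℝ} (hr0 : 0 < r) (hr : r < 1) (k0 : ℕ) {cs : ℝ}
    (hcs : 0 ≤ cs) : Summable fun l : ℕ => r ^ l * ((max (l + 1) k0 : ℕ) : ℝ) ^ cs := by
  set K := ⌈cs⌉₊
  have hgeom : Summable fun l : ℕ => ((l + 1 : ℕ) : ℝ) ^ K * r ^ l := by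
    have h := (summable_nat_add_iff 1).2 (summable_pow_mul_geometric_of_norm_lt_one (R := ℝ) K
      (by rwa [Real.norm_of_nonneg hr0.le]))
    exact (h.div_const r).congr fun l => by rw [pow_succ]; field_simp
  refine Summable.of_nonneg_of_le (fun l => by positivity) (fun l => ?_)
    (hgeom.mul_left (((k0 + 1 : ℕ) : ℝ) ^ K))
  have hmax : max (l + 1) k0 ≤ (k0 + 1) * (l + 1) := by
    rcases le_total (l + 1) k0 with h | h
    · rw [max_eq_right h]; nlinarith
    · rw [max_eq_left h]; nlinarith
  calc r ^ l * ((max (l + 1) k0 : ℕ) : ℝ) ^ cs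
      ≤ r ^ l * (((k0 + 1) * (l + 1) : ℕ) : ℝ) ^ (K : ℝ) := by
        gcongr
        exact (rpow_le_rpow (by positivity) (by exact_mod_cast hmax) hcs).trans
          (rpow_le_rpow_of_exponent_le (Nat.one_le_cast.2 (by nlinarith)) (Nat.le_ceil cs))
    _ = ((k0 + 1 : ℕ) : ℝ) ^ K * (((l + 1 : ℕ) : ℝ) ^ K * r ^ l) := by
        rw [rpow_natCast, Nat.cast_mul, mul_pow]; ring

lemma summable_one_div_max_rpow (k0 : ℕ) {cs : ℝ} (hcs : 1 < cs) :
    Summable fun n : ℕ => 1 / ((max n k0 : ℕ) : ℝ) ^ cs := by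
  refine (summable_nat_add_iff 1).1 <| ((summable_nat_add_iff 1).2
    (Real.summable_one_div_nat_rpow.2 hcs)).of_nonneg_of_le (fun n => by positivity) fun n => ?_
  gcongr
  exact le_max_left _ _

namespace StickModel

variable {Ω : Type} [MeasurableSpace Ω] {P : Measure Ω} {lam : ℝ} {μ : Measure ℝ}
  (M : StickModel P lam μ)

lemma iIndepFun_X : iIndepFun M.X P := M.indep.precomp (g := Sum.inl) Sum.inl_injective

lemma iIndepFun_S : iIndepFun M.S P := M.indep.precomp (g := Sum.inr) Sum.inr_injective

lemma indep_iSup_comap_X_S :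
    Indep (⨆ j, MeasurableSpace.comap (M.X j) inferInstance)
      (⨆ i, MeasurableSpace.comap (M.S i) inferInstance) P := by
  have h := indep_iSup_of_disjoint
    (fun i => by cases i; exacts [(M.measX _).comap_le, (M.measS _).comap_le])
    ((iIndepFun_iff_iIndep _ _ _).1 M.indep) Set.isCompl_range_inl_range_inr.disjoint
  simpa only [iSup_range, Sum.elim_inl, Sum.elim_inr] using h

lemma integrable_exp_mul_X (hlam : 0 ≤ lam) {t : ℝ} (ht : t < lam) (j : ℕ) :
    Integrable (fun ω => rexp (t * M.X j ω)) P := by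
  have h := integrable_exp_mul_expMeasure hlam ht
  rw [← M.distX j] at h
  exact h.comp_measurable (M.measX j)

lemma mgf_X (hlam : 0 ≤ lam) {t : ℝ} (ht : t < lam) (j : ℕ) :
    mgf (M.X j) P t = lam / (lam - t) := by
  rw [← mgf_id_map (M.measX j).aemeasurable, M.distX j, mgf]
  exact integral_exp_mul_expMeasure hlam ht

lemma seed_sub_seed {m n : ℕ} (h : m ≤ n) (ω : Ω) :
    M.seed n ω - M.seed m ω = ∑ j ∈ Finset.Ioc m n, M.X j ω := by
  rw [seed, seed, ← Finset.Ico_add_one_add_one_eq_Ioc, Finset.sum_Ico_eq_sub _ (by omega)]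

lemma ae_nonneg_X : ∀ᵐ ω ∂P, ∀ i, 0 ≤ M.X i ω := by
  refine ae_all_iff.2 fun i => ae_of_ae_map (M.measX i).aemeasurable ?_
  rw [M.distX i]
  exact ae_nonneg_expMeasure lam

def gap (n : ℕ) : Set Ω := {ω | ∀ i ≤ n, M.seed i ω + M.S i ω < M.seed (n + 1) ω}

def longSpacings (b : ℝ) (m n : ℕ) : Set Ω :=
  {ω | b * (n - m : ℕ) ≤ ∑ j ∈ Finset.Ioc m n, M.X j ω}

def shortSticks (b : ℝ) (m n : ℕ) : Set Ω :=
  ⋂ i ∈ Finset.range m, M.S i ⁻¹' Iio (b * (n - i : ℕ))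

lemma gap_subset_biUnion (b : ℝ) (n : ℕ) :
    M.gap n ⊆
      ⋃ m ∈ Finset.range (n + 2), M.longSpacings b m (n + 1) ∩ M.shortSticks b m (n + 1) := by
  classical
  intro ω hω
  have hex : ∃ m, b * (n + 1 - m : ℕ) ≤ M.seed (n + 1) ω - M.seed m ω :=
    ⟨n + 1, by simp⟩
  have hm : Nat.find hex ≤ n + 1 := Nat.find_min' hex (by simp)
  simp only [longSpacings, shortSticks, mem_iUnion, mem_inter_iff, mem_iInter, mem_ofPred_eq,
    mem_preimage, mem_Iio, Finset.mem_range]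
  refine ⟨Nat.find hex, by omega, ?_, fun i hi => ?_⟩
  · rw [← M.seed_sub_seed hm]
    exact Nat.find_spec hex
  · have h1 := Nat.find_min hex hi
    have h2 := hω i (by omega)
    linarith [not_le.1 h1]

lemma measureReal_shortSticks_le {b : ℝ} {φ : ℕ → ℝ} (hφ : ∀ k, 0 < φ k)
    (hF : ∀ k : ℕ, μ.real (Iio (b * k)) ≤ φ k / φ (k + 1)) {m n : ℕ} (hm : m ≤ n) :
    P.real (M.shortSticks b m n) ≤ φ (n + 1 - m) / φ (n + 1) := by
  have hprod : P.real (M.shortSticks b m n)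
      = ∏ i ∈ Finset.range m, μ.real (Iio (b * (n - i : ℕ))) := by
    rw [shortSticks, measureReal_def,
      M.iIndepFun_S.meas_biInter fun i _ => ⟨_, measurableSet_Iio, rfl⟩, ENNReal.toReal_prod]
    refine Finset.prod_congr rfl fun i _ => ?_
    rw [← Measure.map_apply (M.measS i) measurableSet_Iio, M.distS i, measureReal_def]
  rw [hprod]
  refine prod_range_le_div_of_le_div (ψ := fun i => φ (n + 1 - i))
    (fun _ _ => measureReal_nonneg) (fun _ => hφ _) fun i hi => ?_
  have e1 : n + 1 - (i + 1) = n - i := by omega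
  have e2 : n + 1 - i = n - i + 1 := by omega
  simpa only [e1, e2] using hF (n - i)

lemma measureReal_longSpacings_inter_shortSticks (b : ℝ) (m n : ℕ) :
    P.real (M.longSpacings b m n ∩ M.shortSticks b m n)
      = P.real (M.longSpacings b m n) * P.real (M.shortSticks b m n) := by
  have hX : MeasurableSet[⨆ j, MeasurableSpace.comap (M.X j) inferInstance]
      (M.longSpacings b m n) := by
    have hsum : Measurable[⨆ j, MeasurableSpace.comap (M.X j) inferInstance]
        fun ω => ∑ j ∈ Finset.Ioc m n, M.X j ω :=
      Finset.measurable_sum _ fun j _ => (comap_measurable (M.X j)).mono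
        (le_iSup (fun j => MeasurableSpace.comap (M.X j) _) j) le_rfl
    exact hsum measurableSet_Ici
  have hS : MeasurableSet[⨆ i, MeasurableSpace.comap (M.S i) inferInstance]
      (M.shortSticks b m n) :=
    .biInter (Finset.countable_toSet _) fun i _ => (comap_measurable (M.S i)).mono
      (le_iSup (fun i => MeasurableSpace.comap (M.S i) _) i) le_rfl measurableSet_Iio
  rw [measureReal_def, (Indep_iff _ _ _).1 M.indep_iSup_comap_X_S _ _ hX hS, ENNReal.toReal_mul,
    ← measureReal_def, ← measureReal_def]

lemma percolates_of_eventually_notMem_gap {ω : Ω} (hX : ∀ i, 0 ≤ M.X i ω)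
    (hseed : Tendsto (M.seed · ω) atTop atTop) (hgap : ∀ᶠ n in atTop, ω ∉ M.gap n) :
    M.Percolates ω := by
  obtain ⟨N, hN⟩ := eventually_atTop.1 hgap
  have hmono : Monotone (M.seed · ω) := monotone_nat_of_le_succ fun n => by
    simp only [seed, Finset.sum_range_succ _ (n + 1)]
    linarith [hX (n + 1)]
  have hunb : ¬BddAbove ((M.seed · ω) '' Ici N) := by
    rintro ⟨B, hB⟩
    obtain ⟨n, hn, hBn⟩ := ((eventually_ge_atTop N).and (hseed.eventually_gt_atTop B)).exists
    exact (hB ⟨n, hn, rfl⟩).not_gt hBn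
  refine ⟨M.seed N ω, ?_⟩
  rw [← biUnion_Ici_Ico_map_succ (fun i hi => hmono hi) hunb]
  refine iUnion₂_subset fun n hn t ht => ?_
  have hcov := hN n hn
  simp only [gap, mem_ofPred_eq, not_forall, not_lt] at hcov
  obtain ⟨i, hi, hcov⟩ := hcov
  exact mem_iUnion.2 ⟨i, (hmono hi).trans ht.1, ht.2.le.trans (by simpa using hcov)⟩

variable [IsProbabilityMeasure P]

lemma measureReal_mul_card_le_sum_X_le (hlam : 0 ≤ lam) {b : ℝ} (hb : 1 < lam * b)
    (s : Finset ℕ) :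
    P.real {ω | b * #s ≤ ∑ j ∈ s, M.X j ω} ≤ (lam * b * rexp (1 - lam * b)) ^ #s := by
  have hb0 : 0 < b := pos_of_mul_pos_right (one_pos.trans hb) hlam
  have hθ : lam - b⁻¹ < lam := sub_lt_self _ (inv_pos.2 hb0)
  have hθ0 : 0 ≤ lam - b⁻¹ := by
    rw [sub_nonneg, inv_le_iff_one_le_mul₀ hb0]; exact hb.le
  have h := measure_ge_le_exp_mul_mgf (b * #s) hθ0
    (M.iIndepFun_X.integrable_exp_mul_sum M.measX (s := s) fun j _ =>
      M.integrable_exp_mul_X hlam hθ j)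
  rw [M.iIndepFun_X.mgf_sum M.measX, Finset.prod_congr rfl fun j _ => M.mgf_X hlam hθ j,
    Finset.prod_const, sub_sub_cancel, div_inv_eq_mul] at h
  have hexp : -(lam - b⁻¹) * (b * #s) = #s * (1 - lam * b) := by field_simp; ring
  rw [hexp, Real.exp_nat_mul, ← mul_pow, mul_comm (rexp _)] at h
  simpa [Finset.sum_apply] using h

lemma measureReal_sum_X_le_le (hlam : 0 ≤ lam) (a : ℝ) (s : Finset ℕ) :
    P.real {ω | ∑ j ∈ s, M.X j ω ≤ a} ≤ rexp a * (lam / (lam + 1)) ^ #s := by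
  have ht : -1 < lam := by linarith
  have h := measure_le_le_exp_mul_mgf a (by norm_num)
    (M.iIndepFun_X.integrable_exp_mul_sum M.measX (s := s) fun j _ =>
      M.integrable_exp_mul_X hlam ht j)
  rw [M.iIndepFun_X.mgf_sum M.measX, Finset.prod_congr rfl fun j _ => M.mgf_X hlam ht j] at h
  simpa [Finset.sum_apply, div_pow] using h

lemma ae_tendsto_seed (hlam : 0 ≤ lam) : ∀ᵐ ω ∂P, Tendsto (M.seed · ω) atTop atTop := by
  have hq : lam / (lam + 1) < 1 := (div_lt_one (by linarith)).2 (by linarith)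
  have hgeom (a : ℕ) : Summable fun n : ℕ => rexp a * (lam / (lam + 1)) ^ (n + 1) :=
    ((summable_geometric_of_lt_one (by positivity) hq).mul_left (rexp a * (lam / (lam + 1)))).congr
      fun n => by ring
  have hfar (a : ℕ) : ∀ᵐ ω ∂P, ∀ᶠ n in atTop, ω ∉ {ω | M.seed n ω ≤ a} :=
    ae_eventually_notMem_of_summable (hgeom a) fun n => by
      simpa [seed] using M.measureReal_sum_X_le_le hlam a (Finset.range (n + 1))
  filter_upwards [ae_all_iff.2 hfar] with ω hω
  refine tendsto_atTop.2 fun y => ?_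
  filter_upwards [hω ⌈y⌉₊] with n hn
  exact (Nat.le_ceil y).trans (not_le.1 hn).le

lemma measureReal_longSpacings_le (hlam : 0 ≤ lam) {b : ℝ} (hb : 1 < lam * b) (m n : ℕ) :
    P.real (M.longSpacings b m n) ≤ (lam * b * rexp (1 - lam * b)) ^ (n - m) := by
  simpa [longSpacings] using M.measureReal_mul_card_le_sum_X_le hlam hb (Finset.Ioc m n)

lemma measureReal_gap_le (hlam : 0 ≤ lam) {b : ℝ} (hb : 1 < lam * b) {φ : ℕ → ℝ}
    (hφ : ∀ k, 0 < φ k) (hF : ∀ k : ℕ, μ.real (Set.Iio (b * k)) ≤ φ k / φ (k + 1))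
    (hsum : Summable fun l => (lam * b * rexp (1 - lam * b)) ^ l * φ (l + 1)) (n : ℕ) :
    P.real (M.gap n)
      ≤ (∑' l, (lam * b * rexp (1 - lam * b)) ^ l * φ (l + 1)) / φ (n + 2) := by
  set r := lam * b * rexp (1 - lam * b)
  have hr : 0 ≤ r := mul_nonneg (by linarith) (exp_pos _).le
  calc P.real (M.gap n)
      ≤ ∑ m ∈ Finset.range (n + 2), r ^ (n + 1 - m) * (φ (n + 2 - m) / φ (n + 2)) := by
        refine (measureReal_mono (M.gap_subset_biUnion b n) (measure_ne_top _ _)).trans <|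
          (measureReal_biUnion_finset_le _ _).trans <| Finset.sum_le_sum fun m hm => ?_
        have hm : m ≤ n + 1 := Nat.lt_succ_iff.1 (Finset.mem_range.1 hm)
        rw [measureReal_longSpacings_inter_shortSticks]
        gcongr
        · exact M.measureReal_longSpacings_le hlam hb m (n + 1)
        · exact M.measureReal_shortSticks_le hφ hF hm
    _ = (∑ l ∈ Finset.range (n + 2), r ^ l * φ (l + 1)) / φ (n + 2) := by
        rw [Finset.sum_div, ← Finset.sum_range_reflect]
        refine Finset.sum_congr rfl fun m hm => ?_
        have hm := Finset.mem_range.1 hm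
        rw [show n + 1 - (n + 2 - 1 - m) = m by omega,
          show n + 2 - (n + 2 - 1 - m) = m + 1 by omega, mul_div_assoc]
    _ ≤ _ := by
        gcongr
        · exact (hφ _).le
        · exact hsum.sum_le_tsum _ fun l _ => mul_nonneg (pow_nonneg hr l) (hφ _).le

lemma ae_eventually_notMem_gap (hlam : 0 ≤ lam) {b : ℝ} (hb : 1 < lam * b) {φ : ℕ → ℝ}
    (hφ : ∀ k, 0 < φ k) (hF : ∀ k : ℕ, μ.real (Set.Iio (b * k)) ≤ φ k / φ (k + 1))
    (hsum : Summable fun l => (lam * b * rexp (1 - lam * b)) ^ l * φ (l + 1))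
    (hφsum : Summable fun n => 1 / φ n) :
    ∀ᵐ ω ∂P, ∀ᶠ n in atTop, ω ∉ M.gap n :=
  ae_eventually_notMem_of_summable (((summable_nat_add_iff 2).2 hφsum).mul_left _) fun n =>
    (M.measureReal_gap_le hlam hb hφ hF hsum n).trans_eq (mul_one_div _ _).symm

end StickModel

theorem stick_percolates_of_cauchy_tail_supercritical_general {Ω : Type} [MeasurableSpace Ω]
    (P : Measure Ω) [IsProbabilityMeasure P] (lam : ℝ) (hlam : 0 < lam)
    (μ : Measure ℝ) [IsProbabilityMeasure μ]
    (M : StickModel P lam μ) (c : ℝ) (hc : 0 < c)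
    (htail : Filter.Tendsto (fun x : ℝ => x * (μ (Set.Ioi x)).toReal)
      Filter.atTop (nhds c))
    (hsup : 1 / c < lam) :
    P {ω | M.Percolates ω} = 1 := by
  obtain ⟨b, hlamb, hbc⟩ := exists_between ((one_div_lt hc hlam).1 hsup)
  have hb : 0 < b := (one_div_pos.2 hlam).trans hlamb
  have hlb : 1 < lam * b := (div_lt_iff₀' hlam).1 hlamb
  obtain ⟨cs, hcs, hcsb⟩ := exists_between ((one_lt_div hb).2 hbc)
  obtain ⟨k0, hk0, hF⟩ :=
    exists_measureReal_Iio_le_max_rpow_div htail hb hcs.le ((lt_div_iff₀ hb).1 hcsb)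
  have hgap := M.ae_eventually_notMem_gap hlam.le hlb
    (fun k => rpow_pos_of_pos (Nat.cast_pos.2 (hk0.trans (le_max_right k k0))) cs) hF
    (summable_pow_mul_max_rpow (by positivity) (mul_exp_one_sub_lt_one hlb.ne') k0 (by linarith))
    (summable_one_div_max_rpow k0 hcs)
  have hperc : ∀ᵐ ω ∂P, M.Percolates ω := by
    filter_upwards [M.ae_nonneg_X, M.ae_tendsto_seed hlam.le, hgap] with ω hX hseed hω
    exact M.percolates_of_eventually_notMem_gap hX hseed hω
  exact (measure_congr (ae_eq_univ.2 (ae_iff.1 hperc))).trans measure_univ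

/-- Cauchy-type tail `x · R(x) → c`: if `λ > 1/c` the system percolates with
probability 1. -/
theorem stick_percolates_of_cauchy_tail_supercritical {Ω : Type} [MeasurableSpace Ω]
    (P : Measure Ω) [IsProbabilityMeasure P] (lam : ℝ) (hlam : 0 < lam)
    (μ : Measure ℝ) [IsProbabilityMeasure μ] (hμ : μ (Set.Ioi (0 : ℝ)) = 1)
    (M : StickModel P lam μ) (c : ℝ) (hc : 0 < c)
    (htail : Filter.Tendsto (fun x : ℝ => x * (μ (Set.Ioi x)).toReal)
      Filter.atTop (nhds c))
    (hsup : 1 / c < lam) :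
    P {ω | M.Percolates ω} = 1 :=
  stick_percolates_of_cauchy_tail_supercritical_general P lam hlam μ M c hc htail hsup
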